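/- Let F be the formal power series over ℚ whose coefficient of q^n is (n+1)·σ₁(n+1), i.e., F = Σ_{k≥1} k·σ₁(k)·q^{k−1}. Then for every natural number g ≥ 1, the Bryan–Leung count N_{g,5} := g · (coefficient of q^5 in F^{g−1}) satisfies N_{g,5} = (12/5)·g(g−1)(27g⁴ − 198g³ + 687g² − 1213g + 860). -/

import Mathlib

/-!
Since `F = 1 + 6q + 12q² + 28q³ + 30q⁴ + 72q⁵ + O(q⁶)`, writing `F^(m+1) = F^m · F` shows
by induction on `m` that each coefficient of `q^n` in `F^m`, `n ≤ 5`, is a polynomial in `m`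
of degree `n`, determined by the lower ones. Substituting `m = g - 1` into the one of degree 5
gives the node polynomial.
-/

/-- The Bryan–Leung power series `F = Σ_{k≥1} k·σ₁(k)·q^{k−1}` over `ℚ`,
whose coefficient of `q^n` is `(n+1)·σ₁(n+1)`. -/
noncomputable def FBL : PowerSeries ℚ :=
  PowerSeries.mk fun n => (((n + 1) * ArithmeticFunction.sigma 1 (n + 1) : ℕ) : ℚ)

open PowerSeries

lemma PowerSeries.coeff_pow_succ_eq_sum_range {R : Type*} [CommSemiring R] (f : R⟦X⟧)
    (m n : ℕ) :
    coeff n (f ^ (m + 1)) = ∑ k ∈ Finset.range (n + 1), coeff k (f ^ m) * coeff (n - k) f := by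
  rw [pow_succ, coeff_mul, Finset.Nat.sum_antidiagonal_eq_sum_range_succ_mk]

lemma coeff_FBL (n : ℕ) :
    coeff n FBL = (((n + 1) * ArithmeticFunction.sigma 1 (n + 1) : ℕ) : ℚ) :=
  coeff_mk _ _

@[simp] lemma coeff_zero_FBL : coeff 0 FBL = 1 := by
  rw [coeff_FBL]; norm_num [show ArithmeticFunction.sigma 1 1 = 1 by decide]

@[simp] lemma coeff_one_FBL : coeff 1 FBL = 6 := by
  rw [coeff_FBL]; norm_num [show ArithmeticFunction.sigma 1 2 = 3 by decide]

@[simp] lemma coeff_two_FBL : coeff 2 FBL = 12 := by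
  rw [coeff_FBL]; norm_num [show ArithmeticFunction.sigma 1 3 = 4 by decide]

@[simp] lemma coeff_three_FBL : coeff 3 FBL = 28 := by
  rw [coeff_FBL]; norm_num [show ArithmeticFunction.sigma 1 4 = 7 by decide]

@[simp] lemma coeff_four_FBL : coeff 4 FBL = 30 := by
  rw [coeff_FBL]; norm_num [show ArithmeticFunction.sigma 1 5 = 6 by decide]

@[simp] lemma coeff_five_FBL : coeff 5 FBL = 72 := by
  rw [coeff_FBL]; norm_num [show ArithmeticFunction.sigma 1 6 = 12 by decide]

@[simp] lemma coeff_zero_FBL_pow (m : ℕ) : coeff 0 (FBL ^ m) = 1 := by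
  induction m with
  | zero => simp
  | succ m ih => simp [coeff_pow_succ_eq_sum_range, ih]

@[simp] lemma coeff_one_FBL_pow (m : ℕ) : coeff 1 (FBL ^ m) = 6 * m := by
  induction m with
  | zero => simp
  | succ m ih =>
    simp [coeff_pow_succ_eq_sum_range, Finset.sum_range_succ, ih]
    ring

@[simp] lemma coeff_two_FBL_pow (m : ℕ) : coeff 2 (FBL ^ m) = 18 * (m : ℚ) ^ 2 - 6 * m := by
  induction m with
  | zero => simp
  | succ m ih =>
    simp [coeff_pow_succ_eq_sum_range, Finset.sum_range_succ, ih]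
    ring

@[simp] lemma coeff_three_FBL_pow (m : ℕ) :
    coeff 3 (FBL ^ m) = 36 * (m : ℚ) ^ 3 - 36 * (m : ℚ) ^ 2 + 28 * m := by
  induction m with
  | zero => simp
  | succ m ih =>
    simp [coeff_pow_succ_eq_sum_range, Finset.sum_range_succ, ih]
    ring

@[simp] lemma coeff_four_FBL_pow (m : ℕ) :
    coeff 4 (FBL ^ m) =
      54 * (m : ℚ) ^ 4 - 108 * (m : ℚ) ^ 3 + 186 * (m : ℚ) ^ 2 - 102 * m := by
  induction m with
  | zero => simp
  | succ m ih =>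
    simp [coeff_pow_succ_eq_sum_range, Finset.sum_range_succ, ih]
    ring

lemma coeff_five_FBL_pow (m : ℕ) :
    coeff 5 (FBL ^ m) = (324 * (m : ℚ) ^ 5 - 1080 * (m : ℚ) ^ 4 + 3060 * (m : ℚ) ^ 3
      - 3900 * (m : ℚ) ^ 2 + 1956 * m) / 5 := by
  induction m with
  | zero => simp
  | succ m ih =>
    simp [coeff_pow_succ_eq_sum_range, Finset.sum_range_succ, ih]
    ring

theorem N_g_5_general (g : ℕ) :
    (g : ℚ) * (PowerSeries.coeff (R := ℚ) 5) (FBL ^ (g - 1)) =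
      (12 / 5 : ℚ) * (g : ℚ) * ((g : ℚ) - 1) * (27 * (g : ℚ) ^ 4 - 198 * (g : ℚ) ^ 3 + 687 * (g : ℚ) ^ 2 - 1213 * (g : ℚ) + 860) := by
  cases g with
  | zero => simp
  | succ m =>
    rw [Nat.add_sub_cancel, coeff_five_FBL_pow]
    push_cast
    ring

/-- The Bryan–Leung count `N_{g,5} := g · (coefficient of q^5 in F^{g−1})`
is given by the node polynomial of Table (5.1). -/
theorem N_g_5 (g : ℕ) (hg : 1 ≤ g) :
    (g : ℚ) * (PowerSeries.coeff (R := ℚ) 5) (FBL ^ (g - 1)) =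
      (12 / 5 : ℚ) * (g : ℚ) * ((g : ℚ) - 1) * (27 * (g : ℚ) ^ 4 - 198 * (g : ℚ) ^ 3 + 687 * (g : ℚ) ^ 2 - 1213 * (g : ℚ) + 860) :=
  N_g_5_general g
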